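/- Let F be a (p-1)-lacunary formal group law over 𝔬 and g(t) = ∑_j c_j t^{1+j(p-1)} a (p-1)-lacunary endomorphism of F. For λ ∈ 𝔒 (an 𝔬-algebra), the λ-blowup g^{(λ)}(t) = ∑_j λ^j c_j t^{1+j(p-1)} is an endomorphism of the blown-up formal group F^{(λ)}, and the map g ↦ g^{(λ)} is a ring homomorphism End_𝔬(F) → End_𝔒(F^{(λ)}) on (p-1)-lacunary endomorphisms, which is injective if λ is a nonzerodivisor in 𝔒. -/

import Mathlib

/-!
Write a lacunary series as `∑ H_j` with `H_j` homogeneous of degree `1 + j(p-1)`. A product of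
`n` lacunary series only has monomials of degree `n + j(p-1)`, and multiplying its part of that
degree by `λ^j` is multiplicative. Hence, coefficient by coefficient, substituting lacunary series
into a lacunary series commutes with the blowup; the endomorphism property, additivity and
multiplicativity are all instances of this, after base change along `𝔬 → 𝔒`. Injectivity holds
because the blowup multiplies each coefficient by a power of `λ`.
-/

open MvPowerSeries

/-- Substitution of the family `g : σ → R[[τ]]` of power series (each of positive
order) into the multivariable power series `f ∈ R[[σ]]`: since each `g i` has no
constant term, the coefficient of a monomial `m` in `f(g)` only involves the
monomials of `f` of total degree at most `|m|`, so it is given by a finite sum. -/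
noncomputable def msubst {σ τ R : Type*} [Fintype σ] [DecidableEq σ] [CommRing R]
    (f : MvPowerSeries σ R) (g : σ → MvPowerSeries τ R) : MvPowerSeries τ R :=
  fun m =>
    ∑ d ∈ Finset.Iic (Finsupp.equivFunOnFinite.symm
        (fun _ : σ => m.sum fun _ v => v)),
      MvPowerSeries.coeff d f * MvPowerSeries.coeff m (∏ i, g i ^ d i)

/-- `F ∈ R[[x,y]]` is a formal group law: `F(x,0) = x`, `F(0,y) = y`, and
`F(F(x,y),z) = F(x,F(y,z))`. -/
def IsFormalGroupLaw {R : Type*} [CommRing R] (F : MvPowerSeries (Fin 2) R) : Prop :=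
  msubst F ![(X 0 : MvPowerSeries (Fin 2) R), 0] = X 0 ∧
  msubst F ![(0 : MvPowerSeries (Fin 2) R), X 1] = X 1 ∧
  msubst F ![msubst F ![(X 0 : MvPowerSeries (Fin 3) R), X 1], X 2] =
    msubst F ![(X 0 : MvPowerSeries (Fin 3) R), msubst F ![X 1, X 2]]

/-- Composition `f ∘ g` of one-variable power series, `g` having positive order. -/
noncomputable def scomp {R : Type*} [CommRing R] (f g : PowerSeries R) :
    PowerSeries R :=
  msubst f (fun _ : Unit => g)

/-- `g` is an endomorphism of the formal group law `F`: `g` has no constant term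
and `g(F(x,y)) = F(g(x), g(y))`. -/
def IsEndoOf {R : Type*} [CommRing R] (g : PowerSeries R)
    (F : MvPowerSeries (Fin 2) R) : Prop :=
  PowerSeries.constantCoeff g = 0 ∧
  msubst g (fun _ : Unit => F) =
    msubst F ![msubst g (fun _ : Unit => (X 0 : MvPowerSeries (Fin 2) R)),
      msubst g (fun _ : Unit => (X 1 : MvPowerSeries (Fin 2) R))]

/-- A power series is `(p-1)`-lacunary if its only (possibly) nonzero homogeneous
components are in degrees `≡ 1 mod (p-1)`, i.e. of the form `1 + j(p-1)`. -/
def Lacunary (p : ℕ) {σ R : Type*} [CommRing R] (F : MvPowerSeries σ R) : Prop :=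
  ∀ m : σ →₀ ℕ, MvPowerSeries.coeff m F ≠ 0 →
    ∃ j : ℕ, (m.sum fun _ v => v) = 1 + j * (p - 1)

/-- The `λ`-blowup of a `(p-1)`-lacunary power series `G = ∑_j H_j` (with `H_j`
homogeneous of degree `1 + j(p-1)`), namely `G^{(λ)} = ∑_j λ^j H_j`. -/
noncomputable def blowup (p : ℕ) {σ R : Type*} [CommRing R] (lam : R)
    (F : MvPowerSeries σ R) : MvPowerSeries σ R :=
  fun m =>
    lam ^ (((m.sum fun _ v => v) - 1) / (p - 1)) * MvPowerSeries.coeff m F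

section ShiftedBlowup

variable {p : ℕ} {σ R : Type*} [CommRing R]

def LacunaryFrom (p s : ℕ) (f : MvPowerSeries σ R) : Prop :=
  ∀ m : σ →₀ ℕ, coeff m f ≠ 0 → ∃ j : ℕ, m.degree = s + j * (p - 1)

noncomputable def blowupFrom (p : ℕ) (lam : R) (s : ℕ) (f : MvPowerSeries σ R) :
    MvPowerSeries σ R :=
  fun m => lam ^ ((m.degree - s) / (p - 1)) * coeff m f

theorem coeff_blowupFrom (lam : R) (s : ℕ) (f : MvPowerSeries σ R) (m : σ →₀ ℕ) :
    coeff m (blowupFrom p lam s f) = lam ^ ((m.degree - s) / (p - 1)) * coeff m f :=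
  rfl

theorem lacunaryFrom_one_iff {f : MvPowerSeries σ R} : LacunaryFrom p 1 f ↔ Lacunary p f :=
  Iff.rfl

theorem blowupFrom_one (lam : R) (f : MvPowerSeries σ R) :
    blowupFrom p lam 1 f = blowup p lam f :=
  rfl

theorem coeff_blowup (lam : R) (f : MvPowerSeries σ R) (m : σ →₀ ℕ) :
    coeff m (blowup p lam f) = lam ^ ((m.degree - 1) / (p - 1)) * coeff m f :=
  rfl

theorem add_sub_add_div_eq {q a b s t j k : ℕ} (ha : a = s + j * q) (hb : b = t + k * q) :
    (a + b - (s + t)) / q = (a - s) / q + (b - t) / q := by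
  subst ha hb
  rw [show s + j * q + (t + k * q) - (s + t) = j * q + k * q by omega,
    Nat.add_sub_cancel_left, Nat.add_sub_cancel_left,
    Nat.add_div_of_dvd_right (dvd_mul_left q j)]

variable {s t : ℕ} {f g : MvPowerSeries σ R}

theorem LacunaryFrom.mul (hf : LacunaryFrom p s f) (hg : LacunaryFrom p t g) :
    LacunaryFrom p (s + t) (f * g) := by
  classical
  intro m hm
  rw [coeff_mul] at hm
  obtain ⟨⟨a, b⟩, hab, hne⟩ := Finset.exists_ne_zero_of_sum_ne_zero hm
  obtain ⟨j, hj⟩ := hf a (left_ne_zero_of_mul hne)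
  obtain ⟨k, hk⟩ := hg b (right_ne_zero_of_mul hne)
  refine ⟨j + k, ?_⟩
  rw [← Finset.HasAntidiagonal.mem_antidiagonal.1 hab, map_add, hj, hk]
  ring

theorem blowupFrom_mul (lam : R) (hf : LacunaryFrom p s f) (hg : LacunaryFrom p t g) :
    blowupFrom p lam (s + t) (f * g) = blowupFrom p lam s f * blowupFrom p lam t g := by
  classical
  ext m
  rw [coeff_blowupFrom, coeff_mul, coeff_mul, Finset.mul_sum]
  refine Finset.sum_congr rfl fun ⟨a, b⟩ hab => ?_
  rw [← Finset.HasAntidiagonal.mem_antidiagonal.1 hab, coeff_blowupFrom, coeff_blowupFrom]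
  by_cases hfa : coeff a f = 0
  · simp [hfa]
  by_cases hgb : coeff b g = 0
  · simp [hgb]
  obtain ⟨j, hj⟩ := hf a hfa
  obtain ⟨k, hk⟩ := hg b hgb
  rw [map_add, add_sub_add_div_eq hj hk, pow_add]
  ring

theorem lacunaryFrom_zero_one : LacunaryFrom p 0 (1 : MvPowerSeries σ R) := by
  classical
  intro m hm
  rw [coeff_one] at hm
  split_ifs at hm with h
  · exact ⟨0, by simp [h]⟩
  · exact absurd rfl hm

theorem blowupFrom_zero_one (lam : R) : blowupFrom p lam 0 (1 : MvPowerSeries σ R) = 1 := by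
  classical
  ext m
  rw [coeff_blowupFrom, coeff_one]
  split_ifs with hm
  · simp [hm]
  · rw [mul_zero]

theorem LacunaryFrom.prod {ι : Type*} {u : Finset ι} {w : ι → ℕ} {f : ι → MvPowerSeries σ R}
    (hf : ∀ i ∈ u, LacunaryFrom p (w i) (f i)) :
    LacunaryFrom p (∑ i ∈ u, w i) (∏ i ∈ u, f i) := by
  classical
  induction u using Finset.induction with
  | empty => simpa using lacunaryFrom_zero_one
  | insert a u ha ih =>
    rw [Finset.sum_insert ha, Finset.prod_insert ha]
    exact (hf a (u.mem_insert_self a)).mul (ih fun i hi => hf i (Finset.mem_insert_of_mem hi))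

theorem blowupFrom_prod (lam : R) {ι : Type*} {u : Finset ι} {w : ι → ℕ}
    {f : ι → MvPowerSeries σ R} (hf : ∀ i ∈ u, LacunaryFrom p (w i) (f i)) :
    blowupFrom p lam (∑ i ∈ u, w i) (∏ i ∈ u, f i) = ∏ i ∈ u, blowupFrom p lam (w i) (f i) := by
  classical
  induction u using Finset.induction with
  | empty => simpa using blowupFrom_zero_one lam
  | insert a u ha ih =>
    have hu : ∀ i ∈ u, LacunaryFrom p (w i) (f i) := fun i hi => hf i (Finset.mem_insert_of_mem hi)
    rw [Finset.sum_insert ha, Finset.prod_insert ha, Finset.prod_insert ha,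
      blowupFrom_mul lam (hf a (u.mem_insert_self a)) (LacunaryFrom.prod hu), ih hu]

theorem LacunaryFrom.pow (hf : LacunaryFrom p s f) (n : ℕ) : LacunaryFrom p (n * s) (f ^ n) := by
  simpa using LacunaryFrom.prod (u := Finset.range n) fun _ _ => hf

theorem blowupFrom_pow (lam : R) (hf : LacunaryFrom p s f) (n : ℕ) :
    blowupFrom p lam (n * s) (f ^ n) = blowupFrom p lam s f ^ n := by
  simpa using blowupFrom_prod lam (u := Finset.range n) fun _ _ => hf

theorem Lacunary.pow (hf : Lacunary p f) (n : ℕ) : LacunaryFrom p n (f ^ n) := by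
  simpa using LacunaryFrom.pow (lacunaryFrom_one_iff.2 hf) n

theorem blowupFrom_pow_of_lacunary (lam : R) (hf : Lacunary p f) (n : ℕ) :
    blowupFrom p lam n (f ^ n) = blowup p lam f ^ n := by
  simpa only [mul_one, blowupFrom_one] using blowupFrom_pow lam (lacunaryFrom_one_iff.2 hf) n

end ShiftedBlowup

section Substitution

variable {p : ℕ} {σ τ R : Type*} [Fintype σ] [CommRing R]

theorem lacunaryFrom_prod_pow {g : σ → MvPowerSeries τ R} (hg : ∀ i, Lacunary p (g i))
    (d : σ →₀ ℕ) : LacunaryFrom p d.degree (∏ i, g i ^ d i) := by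
  rw [Finsupp.degree_eq_sum]
  exact LacunaryFrom.prod fun i _ => (hg i).pow (d i)

theorem blowupFrom_prod_pow (lam : R) {g : σ → MvPowerSeries τ R}
    (hg : ∀ i, Lacunary p (g i)) (d : σ →₀ ℕ) :
    blowupFrom p lam d.degree (∏ i, g i ^ d i) = ∏ i, blowup p lam (g i) ^ d i := by
  simp_rw [Finsupp.degree_eq_sum, ← blowupFrom_pow_of_lacunary lam (hg _)]
  exact blowupFrom_prod lam fun i _ => (hg i).pow (d i)

variable [DecidableEq σ]

theorem coeff_msubst (f : MvPowerSeries σ R) (g : σ → MvPowerSeries τ R) (m : τ →₀ ℕ) :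
    coeff m (msubst f g) =
      ∑ d ∈ Finset.Iic (Finsupp.equivFunOnFinite.symm fun _ : σ => m.degree),
        coeff d f * coeff m (∏ i, g i ^ d i) :=
  rfl

variable {f : MvPowerSeries σ R} {g : σ → MvPowerSeries τ R}

theorem Lacunary.msubst (hf : Lacunary p f) (hg : ∀ i, Lacunary p (g i)) :
    Lacunary p (msubst f g) := by
  rw [← lacunaryFrom_one_iff]
  intro m hm
  rw [coeff_msubst] at hm
  obtain ⟨d, -, hne⟩ := Finset.exists_ne_zero_of_sum_ne_zero hm
  obtain ⟨j, hj⟩ := lacunaryFrom_one_iff.2 hf d (left_ne_zero_of_mul hne)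
  obtain ⟨k, hk⟩ := lacunaryFrom_prod_pow hg d m (right_ne_zero_of_mul hne)
  exact ⟨j + k, by rw [hk, hj]; ring⟩

theorem blowup_msubst (lam : R) (hf : Lacunary p f) (hg : ∀ i, Lacunary p (g i)) :
    blowup p lam (msubst f g) = msubst (blowup p lam f) fun i => blowup p lam (g i) := by
  ext m
  rw [coeff_blowup, coeff_msubst, coeff_msubst, Finset.mul_sum]
  refine Finset.sum_congr rfl fun d _ => ?_
  rw [← blowupFrom_prod_pow lam hg, coeff_blowupFrom, coeff_blowup]
  by_cases hfd : coeff d f = 0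
  · simp [hfd]
  by_cases hgm : coeff m (∏ i, g i ^ d i) = 0
  · simp [hgm]
  obtain ⟨j, hj⟩ := lacunaryFrom_one_iff.2 hf d hfd
  obtain ⟨k, hk⟩ := lacunaryFrom_prod_pow hg d m hgm
  have hexp : (m.degree - 1) / (p - 1) =
      (d.degree - 1) / (p - 1) + (m.degree - d.degree) / (p - 1) := by
    rw [hk, Nat.add_sub_cancel_left]
    simpa using add_sub_add_div_eq (t := 0) hj (zero_add (k * (p - 1))).symm
  rw [hexp, pow_add]
  ring

end Substitution

section Generators

variable {p : ℕ} {σ R : Type*} [CommRing R]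

theorem lacunary_X (i : σ) : Lacunary p (X i : MvPowerSeries σ R) := by
  classical
  intro m hm
  rw [coeff_X] at hm
  split_ifs at hm with h
  · exact ⟨0, by simp [h]⟩
  · exact absurd rfl hm

theorem blowup_X (lam : R) (i : σ) : blowup p lam (X i : MvPowerSeries σ R) = X i := by
  classical
  ext m
  rw [coeff_blowup, coeff_X]
  split_ifs with h
  · simp [h]
  · rw [mul_zero]

theorem constantCoeff_blowup (lam : R) (f : MvPowerSeries σ R) :
    constantCoeff (blowup p lam f) = constantCoeff f := by
  rw [← coeff_zero_eq_constantCoeff_apply, coeff_blowup]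
  simp

theorem blowup_injective {lam : R} (hlam : lam ∈ nonZeroDivisors R) :
    Function.Injective (blowup p lam : MvPowerSeries σ R → MvPowerSeries σ R) := by
  intro f g hfg
  ext m
  have hm := congrArg (coeff m) hfg
  rw [coeff_blowup, coeff_blowup] at hm
  exact (mul_cancel_left_mem_nonZeroDivisors (pow_mem hlam _)).1 hm

theorem Lacunary.map {S : Type*} [CommRing S] (φ : R →+* S) {f : MvPowerSeries σ R}
    (hf : Lacunary p f) : Lacunary p (map φ f) :=
  fun m hm => hf m fun h => hm (by rw [coeff_map, h, map_zero])

end Generators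

section Endomorphisms

variable {p : ℕ} {τ R S : Type*} [CommRing R] [CommRing S]

theorem fun_vec_two {α β : Type*} (f : α → β) (a b : α) :
    (fun i => f (![a, b] i)) = ![f a, f b] := by
  ext i
  fin_cases i <;> rfl

theorem map_msubst {σ : Type*} [Fintype σ] [DecidableEq σ] (φ : R →+* S)
    (f : MvPowerSeries σ R) (g : σ → MvPowerSeries τ R) :
    map φ (msubst f g) = msubst (map φ f) fun i => map φ (g i) := by
  ext m
  simp only [coeff_map, coeff_msubst, map_sum, map_mul, ← map_pow, ← map_prod]

theorem map_msubst_pair (φ : R →+* S) (F : MvPowerSeries (Fin 2) R) (u v : MvPowerSeries τ R) :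
    map φ (msubst F ![u, v]) = msubst (map φ F) ![map φ u, map φ v] := by
  rw [map_msubst, fun_vec_two]

theorem blowup_msubst_pair (lam : R) {F : MvPowerSeries (Fin 2) R} {u v : MvPowerSeries τ R}
    (hF : Lacunary p F) (hu : Lacunary p u) (hv : Lacunary p v) :
    blowup p lam (msubst F ![u, v]) =
      msubst (blowup p lam F) ![blowup p lam u, blowup p lam v] := by
  rw [blowup_msubst lam hF (Fin.forall_fin_two.2 ⟨hu, hv⟩), fun_vec_two]

theorem blowup_scomp (lam : R) {g h : PowerSeries R} (hg : Lacunary p g) (hh : Lacunary p h) :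
    blowup p lam (scomp g h) = scomp (blowup p lam g) (blowup p lam h) :=
  blowup_msubst lam hg fun _ => hh

theorem blowup_msubst_X (lam : R) {g : PowerSeries R} (hg : Lacunary p g) (i : τ) :
    blowup p lam (msubst g fun _ => (X i : MvPowerSeries τ R)) =
      msubst (blowup p lam g) fun _ => X i := by
  rw [blowup_msubst lam hg fun _ => lacunary_X i, blowup_X]

variable {g : PowerSeries R} {F : MvPowerSeries (Fin 2) R}

theorem IsEndoOf.map (φ : R →+* S) (h : IsEndoOf g F) :
    IsEndoOf (PowerSeries.map φ g) (map φ F) := by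
  refine ⟨(constantCoeff_map φ g).trans
    (by rw [← PowerSeries.constantCoeff_eq, h.1, map_zero]), ?_⟩
  have := congrArg (MvPowerSeries.map φ) h.2
  rw [map_msubst, map_msubst_pair, map_msubst, map_msubst] at this
  simp only [map_X] at this
  exact this

theorem IsEndoOf.blowup (lam : R) (hg : Lacunary p g) (hF : Lacunary p F) (h : IsEndoOf g F) :
    IsEndoOf (blowup p lam g) (blowup p lam F) := by
  refine ⟨(constantCoeff_blowup lam g).trans h.1, ?_⟩
  rw [← blowup_msubst lam hg fun _ => hF, h.2,
    blowup_msubst_pair lam hF (hg.msubst fun _ => lacunary_X 0) (hg.msubst fun _ => lacunary_X 1),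
    blowup_msubst_X lam hg, blowup_msubst_X lam hg]

end Endomorphisms

theorem stmt_14_general (p : ℕ)
    (O : Type*) [CommRing O] (F : MvPowerSeries (Fin 2) O)
    (hlac : Lacunary p F)
    (O' : Type*) [CommRing O'] [Algebra O O'] (lam : O')
    (Flam : MvPowerSeries (Fin 2) O')
    (hFlam : Flam = blowup p lam (MvPowerSeries.map (algebraMap O O') F)) :
    -- blowups of lacunary endomorphisms are endomorphisms of the blown-up group law
    (∀ g : PowerSeries O, Lacunary p g → IsEndoOf g F →
      IsEndoOf (blowup p lam (PowerSeries.map (algebraMap O O') g)) Flam) ∧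
    -- `g ↦ g^{(λ)}` is additive for the formal group additions
    (∀ g h : PowerSeries O, Lacunary p g → IsEndoOf g F → Lacunary p h → IsEndoOf h F →
      blowup p lam (PowerSeries.map (algebraMap O O') (msubst F ![g, h])) =
        msubst Flam ![blowup p lam (PowerSeries.map (algebraMap O O') g),
          blowup p lam (PowerSeries.map (algebraMap O O') h)]) ∧
    -- `g ↦ g^{(λ)}` is multiplicative for composition
    (∀ g h : PowerSeries O, Lacunary p g → IsEndoOf g F → Lacunary p h → IsEndoOf h F →
      blowup p lam (PowerSeries.map (algebraMap O O') (scomp g h)) =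
        scomp (blowup p lam (PowerSeries.map (algebraMap O O') g))
          (blowup p lam (PowerSeries.map (algebraMap O O') h))) ∧
    -- injectivity when `λ` is a nonzerodivisor
    (Function.Injective (algebraMap O O') → lam ∈ nonZeroDivisors O' →
      ∀ g h : PowerSeries O, Lacunary p g → IsEndoOf g F → Lacunary p h → IsEndoOf h F →
        blowup p lam (PowerSeries.map (algebraMap O O') g) =
          blowup p lam (PowerSeries.map (algebraMap O O') h) → g = h) := by
  subst hFlam
  set φ := algebraMap O O'
  refine ⟨fun g hg hend => (hend.map φ).blowup lam (hg.map φ) (hlac.map φ), ?_, ?_, ?_⟩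
  · intro g h hg _ hh _
    exact (congrArg (blowup p lam) (map_msubst_pair φ F g h)).trans
      (blowup_msubst_pair lam (hlac.map φ) (hg.map φ) (hh.map φ))
  · intro g h hg _ hh _
    exact (congrArg (blowup p lam) (map_msubst φ g fun _ => h)).trans
      (blowup_scomp lam (hg.map φ) (hh.map φ))
  · intro hφ hlam g h _ _ _ _ hgh
    exact PowerSeries.map_injective φ hφ (blowup_injective hlam hgh)

/-- **Blowing up `(p-1)`-lacunary endomorphisms.**
Let `F` be a `(p-1)`-lacunary formal group law over `𝔬` and `λ` an element of an
`𝔬`-algebra `𝔒`.  For every `(p-1)`-lacunary endomorphism `g` of `F`, the `λ`-blowup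
`g^{(λ)}` is an endomorphism of the blown-up formal group law `F^{(λ)}`, and
`g ↦ g^{(λ)}` is a ring homomorphism on `(p-1)`-lacunary endomorphisms — it sends the
`F`-sum `F(g,h)` to the `F^{(λ)}`-sum and composition `g ∘ h` to composition — which
is injective provided `𝔬` embeds in `𝔒` and `λ` is a nonzerodivisor of `𝔒`. -/
theorem stmt_14 (p : ℕ) [Fact p.Prime]
    (O : Type*) [CommRing O] (F : MvPowerSeries (Fin 2) O)
    (hF : IsFormalGroupLaw F) (hlac : Lacunary p F)
    (O' : Type*) [CommRing O'] [Algebra O O'] (lam : O')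
    (Flam : MvPowerSeries (Fin 2) O')
    (hFlam : Flam = blowup p lam (MvPowerSeries.map (algebraMap O O') F)) :
    -- blowups of lacunary endomorphisms are endomorphisms of the blown-up group law
    (∀ g : PowerSeries O, Lacunary p g → IsEndoOf g F →
      IsEndoOf (blowup p lam (PowerSeries.map (algebraMap O O') g)) Flam) ∧
    -- `g ↦ g^{(λ)}` is additive for the formal group additions
    (∀ g h : PowerSeries O, Lacunary p g → IsEndoOf g F → Lacunary p h → IsEndoOf h F →
      blowup p lam (PowerSeries.map (algebraMap O O') (msubst F ![g, h])) =
        msubst Flam ![blowup p lam (PowerSeries.map (algebraMap O O') g),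
          blowup p lam (PowerSeries.map (algebraMap O O') h)]) ∧
    -- `g ↦ g^{(λ)}` is multiplicative for composition
    (∀ g h : PowerSeries O, Lacunary p g → IsEndoOf g F → Lacunary p h → IsEndoOf h F →
      blowup p lam (PowerSeries.map (algebraMap O O') (scomp g h)) =
        scomp (blowup p lam (PowerSeries.map (algebraMap O O') g))
          (blowup p lam (PowerSeries.map (algebraMap O O') h))) ∧
    -- injectivity when `λ` is a nonzerodivisor
    (Function.Injective (algebraMap O O') → lam ∈ nonZeroDivisors O' →
      ∀ g h : PowerSeries O, Lacunary p g → IsEndoOf g F → Lacunary p h → IsEndoOf h F →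
        blowup p lam (PowerSeries.map (algebraMap O O') g) =
          blowup p lam (PowerSeries.map (algebraMap O O') h) → g = h) :=
  stmt_14_general p O F hlac O' lam Flam hFlam
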